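/- Let J, K ⊆ {1,…,n−1}, and let W_J, W_K ≤ S_n be the standard parabolic subgroups generated by {s_i : i ∈ J} and {s_i : i ∈ K} respectively. Let τ, φ ∈ S_n, let τ̂ be the maximal element of the coset τW_J in the Bruhat order, and let φ̃ be the minimal element of the coset φW_K in the Bruhat order. Then the set W_J I(τ^{−1}) φ W_K = {a u φ b : a ∈ W_J, u ∈ S_n with u ≤ τ^{−1}, b ∈ W_K} has a unique minimal element with respect to the Bruhat order, and this minimal element equals (τ̂^{−1} * (φ̃ w_0))·w_0, where * is the Demazure product. -/

import Mathlib

open scoped Classical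

namespace KK

/-- The simple transposition `s_j = (j, j+1)` in `S_n` (1-indexed letters `1 ≤ j ≤ n-1`);
junk value `1` out of range. -/
def simpleRefl (n : ℕ) (j : ℕ) : Equiv.Perm (Fin n) :=
  if h : 1 ≤ j ∧ j ≤ n - 1 then
    Equiv.swap ⟨j - 1, by omega⟩ ⟨j, by omega⟩
  else 1

/-- The permutation represented by a word in the simple transpositions. -/
def wordProd (n : ℕ) (l : List ℕ) : Equiv.Perm (Fin n) :=
  (l.map (simpleRefl n)).prod

/-- Coxeter length: minimal length of a word in simple transpositions representing `w`. -/
noncomputable def len (n : ℕ) (w : Equiv.Perm (Fin n)) : ℕ :=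
  sInf {k | ∃ l : List ℕ, (∀ j ∈ l, 1 ≤ j ∧ j ≤ n - 1) ∧ l.length = k ∧ wordProd n l = w}

/-- A word is reduced if its letters are genuine simple-transposition indices and its
length equals the Coxeter length of the permutation it represents. -/
def IsReduced (n : ℕ) (l : List ℕ) : Prop :=
  (∀ j ∈ l, 1 ≤ j ∧ j ≤ n - 1) ∧ len n (wordProd n l) = l.length

/-- Bruhat order on `S_n`: `u ≤ w` iff some reduced word for `w` contains a reduced word
for `u` as a subword. -/
def bruhatLE (n : ℕ) (u w : Equiv.Perm (Fin n)) : Prop :=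
  ∃ l l' : List ℕ, IsReduced n l ∧ wordProd n l = w ∧
    l'.Sublist l ∧ IsReduced n l' ∧ wordProd n l' = u

/-- `m` is the greatest element of `K` in the Bruhat order (hence the unique maximal one). -/
def IsBruhatGreatest (n : ℕ) (K : Set (Equiv.Perm (Fin n))) (m : Equiv.Perm (Fin n)) : Prop :=
  m ∈ K ∧ ∀ u ∈ K, bruhatLE n u m

/-- `m` is the least element of `K` in the Bruhat order (hence the unique minimal one). -/
def IsBruhatLeast (n : ℕ) (K : Set (Equiv.Perm (Fin n))) (m : Equiv.Perm (Fin n)) : Prop :=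
  m ∈ K ∧ ∀ u ∈ K, bruhatLE n m u

/-- One step of the Demazure product: `w * s_j = max {w, w s_j}` in the Bruhat order. -/
noncomputable def demStep (n : ℕ) (w : Equiv.Perm (Fin n)) (j : ℕ) : Equiv.Perm (Fin n) :=
  if len n w < len n (w * simpleRefl n j) then w * simpleRefl n j else w

/-- The Demazure product `*(w)` of a (not necessarily reduced) word. -/
noncomputable def demProd (n : ℕ) (l : List ℕ) : Equiv.Perm (Fin n) :=
  l.foldl (demStep n) 1

/-- The binary Demazure product of two permutations, `w * w' = max I(w)I(w')`. -/
noncomputable def demMul (n : ℕ) (w w' : Equiv.Perm (Fin n)) : Equiv.Perm (Fin n) :=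
  if h : ∃ m, IsBruhatGreatest n
      {x | ∃ u v, bruhatLE n u w ∧ bruhatLE n v w' ∧ x = u * v} m
  then h.choose else 1

/-- The longest element `w₀` of `S_n`. -/
def w0 (n : ℕ) : Equiv.Perm (Fin n) := Fin.revPerm



/-- `μ` is a partition with `n` nonnegative integer parts `μ 1 ≥ ⋯ ≥ μ n ≥ 0`. -/
def IsPartition (n : ℕ) (μ : ℕ → ℤ) : Prop :=
  (∀ i, 1 ≤ i → i < n → μ (i + 1) ≤ μ i) ∧ 0 ≤ μ n

/-- `(i, j)` indexes an entry strictly below the top in the triangular array: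
`n ≥ i > j ≥ 1`. -/
def inTriangle (n : ℕ) (p : ℕ × ℕ) : Prop := 1 ≤ p.2 ∧ p.2 < p.1 ∧ p.1 ≤ n

/-- A Gelfand–Tsetlin pattern of size `n`, encoded as a function `a : ℕ → ℕ → ℝ`
(value `a i j` for `n ≥ i ≥ j ≥ 1`, and `0` outside the triangle). -/
def IsGTArray (n : ℕ) (a : ℕ → ℕ → ℝ) : Prop :=
  (∀ i j, 1 ≤ j → j < i → i ≤ n →
      0 ≤ a i j - a (i - 1) j ∧ 0 ≤ a (i - 1) j - a i (j + 1)) ∧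
  (∀ i j, j = 0 ∨ i < j ∨ n < i → a i j = 0)

/-- The Gelfand–Tsetlin polytope `GT(μ)`: GT patterns of size `n` with bottom row `μ`. -/
def GTset (n : ℕ) (μ : ℕ → ℤ) : Set (ℕ → ℕ → ℝ) :=
  {a | IsGTArray n a ∧ ∀ j, 1 ≤ j → j ≤ n → a n j = (μ j : ℝ)}

/-- The integral points `GT_ℤ(μ)` of the Gelfand–Tsetlin polytope. -/
def GTZ (n : ℕ) (μ : ℕ → ℤ) : Set (ℕ → ℕ → ℝ) :=
  {a ∈ GTset n μ | ∀ i j, ∃ m : ℤ, a i j = (m : ℝ)}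

/-- The weight of a GT pattern: `wt a i = Σ_{j=1}^i a i j − Σ_{j=1}^{i-1} a (i-1) j`. -/
noncomputable def wt (a : ℕ → ℕ → ℝ) (i : ℕ) : ℝ :=
  (∑ j ∈ Finset.Icc 1 i, a i j) - ∑ j ∈ Finset.Icc 1 (i - 1), a (i - 1) j

/-- The pairs `(i,j)` with `n ≥ i > j ≥ 1` in increasing lexicographic order. -/
def pairsLex (n : ℕ) : List (ℕ × ℕ) :=
  (List.range' 2 (n - 1)).flatMap fun i => (List.range' 1 (i - 1)).map fun j => (i, j)

/-- The pairs `(i,j)` with `n ≥ i > j ≥ 1` in increasing order for the total order in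
which `(i,j)` precedes `(i',j')` iff `i < i'`, or `i = i'` and `j > j'`. -/
def pairsBar (n : ℕ) : List (ℕ × ℕ) :=
  (List.range' 2 (n - 1)).flatMap fun i => ((List.range' 1 (i - 1)).reverse).map fun j => (i, j)

/-- The pairs `(i,j)` with `n ≥ i > j ≥ 1` in decreasing order for the total order in
which `(i,j)` precedes `(i',j')` iff `i < i'`, or `i = i'` and `j > j'`:
`i` descending and, within each `i`, `j` ascending. -/
def pairsFin (n : ℕ) : List (ℕ × ℕ) :=
  ((List.range' 2 (n - 1)).reverse).flatMap fun i => (List.range' 1 (i - 1)).map fun j => (i, j)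

/-- The word `𝔣(P)`: list the pairs `(i,j)` with `a (i-1) j = a i (j+1)` in the order of
`pairsFin` and record the letter `j` for each. -/
noncomputable def fWord (n : ℕ) (a : ℕ → ℕ → ℝ) : List ℕ :=
  ((pairsFin n).filter fun p => a (p.1 - 1) p.2 = a p.1 (p.2 + 1)).map fun p => p.2

/-- The word `𝔦(Q)`: list the pairs `(i,j)` with `b i j = b (i-1) j` in increasing
lexicographic order and record the letter `i - j` for each. -/
noncomputable def iWord (n : ℕ) (b : ℕ → ℕ → ℝ) : List ℕ :=
  ((pairsLex n).filter fun p => b p.1 p.2 = b (p.1 - 1) p.2).map fun p => p.1 - p.2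



/-- The sequence `d_t`, `1 ≤ t ≤ i+1`, used to define the crystal operators `e_i, f_i`
(with the convention `a_{k,k+1} = 0` for `k ∈ {i-1, i}`). -/
noncomputable def dseq (a : ℕ → ℕ → ℝ) (i : ℕ) : ℕ → ℝ
  | 0 => 0
  | 1 => a i 1 - a (i + 1) 1
  | (t + 2) => dseq a i (t + 1) + a i (t + 1) + (if t + 2 = i + 1 then 0 else a i (t + 2))
      - (if t + 1 = i then 0 else a (i - 1) (t + 1)) - a (i + 1) (t + 2)

/-- `d = min {d_1, …, d_{i+1}}`. -/
noncomputable def dmin (a : ℕ → ℕ → ℝ) (i : ℕ) : ℝ :=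
  ((Finset.Icc 1 (i + 1)).image (dseq a i)).min'
    (Finset.Nonempty.image ⟨1, by simp⟩ _)

/-- `m`: the smallest index `t ∈ [1, i+1]` with `d_t = d`. -/
noncomputable def mIdx (a : ℕ → ℕ → ℝ) (i : ℕ) : ℕ :=
  sInf {t | t ∈ Finset.Icc 1 (i + 1) ∧ dseq a i t = dmin a i}

/-- `M`: the largest index `t ∈ [1, i+1]` with `d_t = d`. -/
noncomputable def MIdx (a : ℕ → ℕ → ℝ) (i : ℕ) : ℕ :=
  sSup {t | t ∈ Finset.Icc 1 (i + 1) ∧ dseq a i t = dmin a i}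

/-- The raising crystal operator `e_i` (`none` plays the role of `0`). -/
noncomputable def eOp (i : ℕ) (a : ℕ → ℕ → ℝ) : Option (ℕ → ℕ → ℝ) :=
  if dmin a i = 0 then none
  else some fun i' j' => if i' = i ∧ j' = mIdx a i then a i' j' + 1 else a i' j'

/-- The lowering crystal operator `f_i` (`none` plays the role of `0`). -/
noncomputable def fOp (i : ℕ) (a : ℕ → ℕ → ℝ) : Option (ℕ → ℕ → ℝ) :=
  if MIdx a i = i + 1 then none
  else some fun i' j' => if i' = i ∧ j' = MIdx a i then a i' j' - 1 else a i' j'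

/-- `m`-fold iteration of a partial operator. -/
noncomputable def iterOp (op : (ℕ → ℕ → ℝ) → Option (ℕ → ℕ → ℝ)) :
    ℕ → (ℕ → ℕ → ℝ) → Option (ℕ → ℕ → ℝ)
  | 0 => fun x => some x
  | (m + 1) => fun x => (op x).bind (iterOp op m)

/-- Apply `op i₁ ^ m₁ ∘ ⋯ ∘ op i_k ^ m_k` to `x`, given the list `[(i₁,m₁),…,(i_k,m_k)]`
(the last pair acts first). -/
noncomputable def applyWord (op : ℕ → (ℕ → ℕ → ℝ) → Option (ℕ → ℕ → ℝ)) :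
    List (ℕ × ℕ) → (ℕ → ℕ → ℝ) → Option (ℕ → ℕ → ℝ)
  | [] => fun x => some x
  | (p :: rest) => fun x => (applyWord op rest x).bind (iterOp (op p.1) p.2)

/-- The highest-weight element `G⁰_μ` of `GT_ℤ(μ)`: the element killed by every `e_i`. -/
noncomputable def G0 (n : ℕ) (μ : ℕ → ℤ) : ℕ → ℕ → ℝ :=
  if h : ∃ P, P ∈ GTZ n μ ∧ ∀ i, 1 ≤ i → i ≤ n - 1 → eOp i P = none then h.choose else 0

/-- The lowest-weight element `G*_μ` of `GT_ℤ(μ)`: the element killed by every `f_i`. -/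
noncomputable def Gstar (n : ℕ) (μ : ℕ → ℤ) : ℕ → ℕ → ℝ :=
  if h : ∃ P, P ∈ GTZ n μ ∧ ∀ i, 1 ≤ i → i ≤ n - 1 → fOp i P = none then h.choose else 0

/-- The Demazure crystal `D(μ, w)` computed from the reduced word `l` for `w`:
`{f_{i₁}^{m₁} ⋯ f_{i_k}^{m_k}(G⁰_μ)} ∩ GT_ℤ(μ)`. -/
noncomputable def demCrystal (n : ℕ) (μ : ℕ → ℤ) (l : List ℕ) : Set (ℕ → ℕ → ℝ) :=
  {P | P ∈ GTZ n μ ∧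
    ∃ ms : List ℕ, ms.length = l.length ∧ applyWord fOp (l.zip ms) (G0 n μ) = some P}

/-- The opposite Demazure crystal `D(μ, w)^op` computed from the reduced word `l`
for `w·w₀`: `{e_{j₁}^{m₁} ⋯ e_{j_t}^{m_t}(G*_μ)} ∩ GT_ℤ(μ)`. -/
noncomputable def opDemCrystal (n : ℕ) (μ : ℕ → ℤ) (l : List ℕ) : Set (ℕ → ℕ → ℝ) :=
  {P | P ∈ GTZ n μ ∧
    ∃ ms : List ℕ, ms.length = l.length ∧ applyWord eOp (l.zip ms) (Gstar n μ) = some P}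

/-- `σ(F)`: the product of `s_{i-j}` over `(i,j) ∈ F` in increasing lexicographic order. -/
noncomputable def sigmaF (n : ℕ) (F : Finset (ℕ × ℕ)) : Equiv.Perm (Fin n) :=
  wordProd n (((pairsLex n).filter fun p => p ∈ F).map fun p => p.1 - p.2)

/-- `σ̄(F)`: the product of `s_j` over `(i,j) ∈ F` in increasing order for the total
order in which `(i,j)` precedes `(i',j')` iff `i < i'`, or `i = i'` and `j > j'`. -/
noncomputable def sigmaBarF (n : ℕ) (F : Finset (ℕ × ℕ)) : Equiv.Perm (Fin n) :=
  wordProd n (((pairsBar n).filter fun p => p ∈ F).map fun p => p.2)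

/-- The Kogan face `K(μ, F)`: the face of `GT(μ)` cut out by `a i j = a (i-1) j`,
`(i,j) ∈ F`. -/
def KoganFace (n : ℕ) (μ : ℕ → ℤ) (F : Finset (ℕ × ℕ)) : Set (ℕ → ℕ → ℝ) :=
  {a ∈ GTset n μ | ∀ p ∈ F, a p.1 p.2 = a (p.1 - 1) p.2}

/-- The dual Kogan face `K̄(μ, F)`: the face of `GT(μ)` cut out by
`a (i-1) j = a i (j+1)`, `(i,j) ∈ F`. -/
def dualKoganFace (n : ℕ) (μ : ℕ → ℤ) (F : Finset (ℕ × ℕ)) : Set (ℕ → ℕ → ℝ) :=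
  {a ∈ GTset n μ | ∀ p ∈ F, a (p.1 - 1) p.2 = a p.1 (p.2 + 1)}

/-- The BiKogan face `K_{λ,μ}(F, F')` of `GT(λ) × GT(μ)`. -/
def biKoganFace (n : ℕ) (lam μ : ℕ → ℤ) (F F' : Finset (ℕ × ℕ)) :
    Set ((ℕ → ℕ → ℝ) × (ℕ → ℕ → ℝ)) :=
  {PQ | PQ.1 ∈ GTset n lam ∧ PQ.2 ∈ GTset n μ ∧
    (∀ p ∈ F, PQ.1 (p.1 - 1) p.2 = PQ.1 p.1 (p.2 + 1)) ∧
    (∀ p ∈ F', PQ.2 p.1 p.2 = PQ.2 (p.1 - 1) p.2)}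

/-- `ϖ(F, F') = σ̄(F)⁻¹ · σ(F')`. -/
noncomputable def biVarpi (n : ℕ) (F F' : Finset (ℕ × ℕ)) : Equiv.Perm (Fin n) :=
  (sigmaBarF n F)⁻¹ * sigmaF n F'

/-- The BiKogan face `K_{λ,μ}(F, F')` is reduced if `ℓ(ϖ(F,F')) = |F| + |F'|`. -/
def biKoganReduced (n : ℕ) (F F' : Finset (ℕ × ℕ)) : Prop :=
  len n (biVarpi n F F') = F.card + F'.card


/-!
The Bruhat order on `S_n` is handled through the tableau criterion: `u ≤ w` iff
`#{a < i | u a ≥ j} ≤ #{a < i | w a ≥ j}` for all `i, j`. In this form it is visibly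
antisymmetric, preserved by inversion and reversed by `· * w₀`, and the lifting property
`u ≤ w ⇒ u s ≤ max (w, w s)` is a local computation. Lifting makes the Demazure product of a
word an upper bound of its subword products, and a descent induction gives the subword property
for every reduced word; together they say that the subword products of a word form the interval
below its Demazure product. For reduced words of `w` and `w'` this reads
`I(w * w') = I(w) I(w')`, and moreover `w * w' = d w'` with `d ≤ w`.

`W_J` is the interval below its longest element `m_J`, and `τ̂⁻¹ = m_J * τ⁻¹`, so
`W_J I(τ⁻¹) = I(τ̂⁻¹)`. An element of the set is then `x = d φ b` with `d ≤ τ̂⁻¹`, `b ∈ W_K`,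
and `φ b ≥ φ̃` gives `φ b w₀ ≤ φ̃ w₀`, so `x w₀ ≤ τ̂⁻¹ * (φ̃ w₀)`, i.e.
`x ≥ (τ̂⁻¹ * (φ̃ w₀)) w₀`; this bound is attained, at `d φ̃` for the `d ≤ τ̂⁻¹` with
`τ̂⁻¹ * (φ̃ w₀) = d φ̃ w₀`.
-/

open Equiv Finset

variable {n : ℕ}

section Words

def IsWord (n : ℕ) (l : List ℕ) : Prop := ∀ j ∈ l, 1 ≤ j ∧ j ≤ n - 1

lemma isWord_concat {l : List ℕ} {j : ℕ} :
    IsWord n (l ++ [j]) ↔ IsWord n l ∧ 1 ≤ j ∧ j ≤ n - 1 := by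
  simp only [IsWord, List.forall_mem_append, List.forall_mem_singleton]

lemma simpleRefl_of_mem {j : ℕ} (hj : 1 ≤ j ∧ j ≤ n - 1) :
    simpleRefl n j = swap ⟨j - 1, by omega⟩ ⟨j, by omega⟩ :=
  dif_pos hj

lemma simpleRefl_mul_self (j : ℕ) : simpleRefl n j * simpleRefl n j = 1 := by
  unfold simpleRefl; split <;> simp

lemma simpleRefl_inv (j : ℕ) : (simpleRefl n j)⁻¹ = simpleRefl n j :=
  inv_eq_of_mul_eq_one_right (simpleRefl_mul_self j)

lemma mul_simpleRefl_mul_simpleRefl (w : Perm (Fin n)) (j : ℕ) :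
    w * simpleRefl n j * simpleRefl n j = w := by
  rw [mul_assoc, simpleRefl_mul_self, mul_one]

@[simp] lemma wordProd_nil : wordProd n [] = 1 := rfl

lemma wordProd_append (l l' : List ℕ) : wordProd n (l ++ l') = wordProd n l * wordProd n l' := by
  simp [wordProd]

lemma wordProd_concat (l : List ℕ) (j : ℕ) :
    wordProd n (l ++ [j]) = wordProd n l * simpleRefl n j := by
  simp [wordProd]

lemma wordProd_reverse (l : List ℕ) : wordProd n l.reverse = (wordProd n l)⁻¹ := by
  simp [wordProd, List.prod_inv_reverse, Function.comp_def, simpleRefl_inv, List.map_reverse]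

lemma mem_closure_simpleRefl_iff {J : Set ℕ} {x : Perm (Fin n)} :
    x ∈ Subgroup.closure (simpleRefl n '' J) ↔
      ∃ l : List ℕ, (∀ j ∈ l, j ∈ J) ∧ wordProd n l = x := by
  refine ⟨fun hx => ?_, ?_⟩
  · induction hx using Subgroup.closure_induction with
    | mem _ hy =>
      obtain ⟨j, hj, rfl⟩ := hy
      exact ⟨[j], by simpa using hj, by simp [wordProd]⟩
    | one => exact ⟨[], by simp, rfl⟩
    | mul _ _ _ _ iha ihb =>
      obtain ⟨la, hla, rfl⟩ := iha
      obtain ⟨lb, hlb, rfl⟩ := ihb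
      exact ⟨la ++ lb, by simpa [or_imp, forall_and] using ⟨hla, hlb⟩, wordProd_append la lb⟩
    | inv _ _ ih =>
      obtain ⟨l, hl, rfl⟩ := ih
      exact ⟨l.reverse, by simpa using hl, wordProd_reverse l⟩
  · rintro ⟨l, hl, rfl⟩
    refine Subgroup.list_prod_mem _ fun x hx => ?_
    obtain ⟨j, hj, rfl⟩ := List.mem_map.mp hx
    exact Subgroup.subset_closure ⟨j, hl j hj, rfl⟩

end Words

section Length

def inversions (w : Perm (Fin n)) : Finset (Fin n × Fin n) := {q | q.1 < q.2 ∧ w q.2 < w q.1}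

def invCount (w : Perm (Fin n)) : ℕ := #(inversions w)

lemma inversions_mul_swap {w : Perm (Fin n)} {a b : Fin n} (hab : a.val + 1 = b.val)
    (h : w a < w b) :
    inversions (w * swap a b) =
      insert (a, b) ((inversions w).map ((swap a b).prodCongr (swap a b)).toEmbedding) := by
  ext ⟨x, y⟩
  simp only [inversions, mem_insert, mem_map_equiv, mem_filter, mem_univ, true_and]
  simp only [Perm.coe_mul, Function.comp_apply, swap_apply_def, Prod.mk.injEq, prodCongr_symm,
    symm_swap, prodCongr_apply, Prod.map_apply]
  have hba : b ≠ a := fun e => by simp [e] at hab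
  split_ifs <;> subst_vars <;> simp only [Fin.lt_def] at * <;> grind

lemma invCount_mul_swap_of_lt {w : Perm (Fin n)} {a b : Fin n} (hab : a.val + 1 = b.val)
    (h : w a < w b) : invCount (w * swap a b) = invCount w + 1 := by
  rw [invCount, inversions_mul_swap hab h, card_insert_of_notMem, card_map, invCount]
  simp only [mem_map_equiv, inversions, mem_filter, prodCongr_symm, symm_swap, prodCongr_apply,
    Prod.map, swap_apply_left, swap_apply_right]
  intro ⟨_, hlt, _⟩
  exact absurd hlt (by rw [Fin.lt_def]; omega)

lemma invCount_mul_swap (w : Perm (Fin n)) {a b : Fin n} (hab : a.val + 1 = b.val) :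
    (w a < w b ∧ invCount (w * swap a b) = invCount w + 1) ∨
    (w b < w a ∧ invCount w = invCount (w * swap a b) + 1) := by
  rcases lt_trichotomy (w a) (w b) with h | h | h
  · exact .inl ⟨h, invCount_mul_swap_of_lt hab h⟩
  · exact absurd (congrArg Fin.val (w.injective h)) (by omega)
  · refine .inr ⟨h, ?_⟩
    have := invCount_mul_swap_of_lt (w := w * swap a b) hab (by simpa using h)
    rwa [mul_assoc, swap_mul_self, mul_one] at this

lemma invCount_mul_simpleRefl (w : Perm (Fin n)) {j : ℕ} (hj : 1 ≤ j ∧ j ≤ n - 1) :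
    (w ⟨j - 1, by omega⟩ < w ⟨j, by omega⟩ ∧ invCount (w * simpleRefl n j) = invCount w + 1) ∨
    (w ⟨j, by omega⟩ < w ⟨j - 1, by omega⟩ ∧ invCount w = invCount (w * simpleRefl n j) + 1) := by
  rw [simpleRefl_of_mem hj]
  exact invCount_mul_swap w (Nat.sub_add_cancel hj.1)

lemma exists_descent {w : Perm (Fin n)} (hw : w ≠ 1) :
    ∃ j, ∃ hj : 1 ≤ j ∧ j ≤ n - 1, w ⟨j, by omega⟩ < w ⟨j - 1, by omega⟩ := by
  obtain ⟨m, rfl⟩ : ∃ m, n = m + 1 := Nat.exists_eq_add_one.mpr (Fin.pos_iff_nonempty.mpr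
    (not_isEmpty_iff.mp fun _ => hw (Subsingleton.elim _ _)))
  by_contra! hasc
  -- a strictly monotone permutation of `Fin (m + 1)` is the identity
  have hmono : StrictMono w := Fin.strictMono_iff_lt_succ.mpr fun i => by
    have := hasc (i + 1) ⟨by omega, by omega⟩
    exact lt_of_le_of_ne this (by simp [Fin.ext_iff])
  exact hw (Equiv.ext fun a => DFunLike.congr_fun
    (Subsingleton.elim (hmono.orderIsoOfSurjective w w.surjective) (OrderIso.refl _)) a)

lemma invCount_one : invCount (1 : Perm (Fin n)) = 0 :=
  card_eq_zero.mpr (filter_eq_empty_iff.mpr fun _ _ h => lt_asymm h.1 h.2)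

lemma invCount_wordProd_le {l : List ℕ} (hl : IsWord n l) :
    invCount (wordProd n l) ≤ l.length := by
  induction l using List.reverseRecOn with
  | nil => simp [invCount_one]
  | append_singleton l j ih =>
    obtain ⟨hl, hj⟩ := isWord_concat.mp hl
    have := ih hl
    rw [wordProd_concat, List.length_append, List.length_singleton]
    rcases invCount_mul_simpleRefl (wordProd n l) hj with ⟨-, h⟩ | ⟨-, h⟩ <;> omega

lemma exists_word_length_eq_invCount (w : Perm (Fin n)) :
    ∃ l, IsWord n l ∧ l.length = invCount w ∧ wordProd n l = w := by
  induction hk : invCount w using Nat.strong_induction_on generalizing w with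
  | _ k ih =>
    by_cases hw : w = 1
    · subst hw
      exact ⟨[], by simp [IsWord], by simp [← hk, invCount_one], rfl⟩
    obtain ⟨j, hj, hdesc⟩ := exists_descent hw
    rcases invCount_mul_simpleRefl w hj with ⟨hasc, -⟩ | ⟨-, hlen⟩
    · exact absurd hasc hdesc.asymm
    obtain ⟨l, hl, hlen', hprod⟩ := ih _ (by omega) (w * simpleRefl n j) rfl
    refine ⟨l ++ [j], isWord_concat.mpr ⟨hl, hj⟩, ?_, ?_⟩
    · rw [List.length_append, List.length_singleton, hlen']
      omega
    · rw [wordProd_concat, hprod, mul_simpleRefl_mul_simpleRefl]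

lemma len_le_length {l : List ℕ} (hl : IsWord n l) : len n (wordProd n l) ≤ l.length :=
  Nat.sInf_le ⟨l, hl, rfl, rfl⟩

lemma len_eq_invCount (w : Perm (Fin n)) : len n w = invCount w := by
  obtain ⟨l, hl, hlen, hw⟩ := exists_word_length_eq_invCount w
  refine le_antisymm (Nat.sInf_le ⟨l, hl, hlen, hw⟩) ?_
  obtain ⟨l', hl', hlen', hw'⟩ : len n w ∈ {k | ∃ l : List ℕ, IsWord n l ∧ l.length = k ∧
      wordProd n l = w} := Nat.sInf_mem ⟨_, l, hl, rfl, hw⟩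
  calc invCount w = invCount (wordProd n l') := by rw [hw']
    _ ≤ len n w := hlen' ▸ invCount_wordProd_le hl'

lemma len_mul_simpleRefl_cases (w : Perm (Fin n)) {j : ℕ} (hj : 1 ≤ j ∧ j ≤ n - 1) :
    (w ⟨j - 1, by omega⟩ < w ⟨j, by omega⟩ ∧ len n (w * simpleRefl n j) = len n w + 1) ∨
    (w ⟨j, by omega⟩ < w ⟨j - 1, by omega⟩ ∧ len n w = len n (w * simpleRefl n j) + 1) := by
  simpa only [len_eq_invCount] using invCount_mul_simpleRefl w hj

lemma len_mul_simpleRefl (w : Perm (Fin n)) {j : ℕ} (hj : 1 ≤ j ∧ j ≤ n - 1) :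
    len n (w * simpleRefl n j) = len n w + 1 ∨ len n w = len n (w * simpleRefl n j) + 1 :=
  (len_mul_simpleRefl_cases w hj).imp (·.2) (·.2)

end Length

section Rank

def rank (w : Perm (Fin n)) (i j : ℕ) : ℕ := #{a : Fin n | a.val < i ∧ j ≤ (w a).val}

def RankLE (u w : Perm (Fin n)) : Prop := ∀ i j, rank u i j ≤ rank w i j

lemma card_filter_le_val (j : ℕ) : #{b : Fin n | j ≤ b.val} = n - j := by
  have := Fin.card_filter_val_lt (n := n) (m := j)
  have := card_filter_add_card_filter_not (s := univ) (fun b : Fin n => b.val < j)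
  simp only [not_lt, card_univ, Fintype.card_fin] at *
  omega

lemma card_filter_le_apply (w : Perm (Fin n)) (j : ℕ) : #{a : Fin n | j ≤ (w a).val} = n - j := by
  rw [card_equiv w (t := {b : Fin n | j ≤ b.val}) (by simp), card_filter_le_val]

lemma rank_succ (w : Perm (Fin n)) {i : ℕ} (hi : i < n) (j : ℕ) :
    rank w (i + 1) j = rank w i j + if j ≤ (w ⟨i, hi⟩).val then 1 else 0 := by
  have hsplit : ({a | a.val < i + 1 ∧ j ≤ (w a).val} : Finset (Fin n)) =
      ({a | a.val < i ∧ j ≤ (w a).val} : Finset (Fin n)) ∪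
        ({a | a = ⟨i, hi⟩ ∧ j ≤ (w a).val} : Finset (Fin n)) := by
    ext a
    simp only [mem_union, mem_filter, mem_univ, true_and, Fin.ext_iff]
    omega
  rw [rank, hsplit, card_union_of_disjoint (disjoint_filter.mpr fun a _ h h' => by
    simp only [Fin.ext_iff] at h'; omega)]
  simp [rank, ← filter_filter, filter_eq', filter_singleton, apply_ite card]

lemma rank_mul_simpleRefl_of_ne (w : Perm (Fin n)) {j i : ℕ} (hj : 1 ≤ j ∧ j ≤ n - 1)
    (hi : i ≠ j) (k : ℕ) : rank (w * simpleRefl n j) i k = rank w i k := by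
  refine card_equiv (simpleRefl n j) fun a => ?_
  have : ((simpleRefl n j) a).val < i ↔ a.val < i := by
    rw [simpleRefl_of_mem hj, swap_apply_def]
    split_ifs <;> simp only [Fin.ext_iff] at * <;> omega
  rw [mem_filter, mem_filter, this, Perm.mul_apply]
  simp

lemma rank_around_simpleRefl (w : Perm (Fin n)) {j : ℕ} (hj : 1 ≤ j ∧ j ≤ n - 1) (k : ℕ) :
    rank w j k = rank w (j - 1) k + (if k ≤ (w ⟨j - 1, by omega⟩).val then 1 else 0) ∧
    rank w (j + 1) k = rank w j k + (if k ≤ (w ⟨j, by omega⟩).val then 1 else 0) ∧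
    rank (w * simpleRefl n j) j k =
      rank w (j - 1) k + (if k ≤ (w ⟨j, by omega⟩).val then 1 else 0) := by
  have hj' : j - 1 + 1 = j := by omega
  have h1 := rank_succ w (i := j - 1) (by omega) k
  have h3 := rank_succ (w * simpleRefl n j) (i := j - 1) (by omega) k
  rw [hj'] at h1 h3
  refine ⟨h1, rank_succ w (by omega) k, ?_⟩
  rw [h3, rank_mul_simpleRefl_of_ne w hj (by omega), Perm.mul_apply, simpleRefl_of_mem hj]
  simp only [swap_apply_left]

lemma rank_inv_add (w : Perm (Fin n)) (i j : ℕ) :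
    rank w⁻¹ i j + (n - i) = (n - j) + rank w j i := by
  have h₁ := card_filter_add_card_filter_not (s := {b : Fin n | j ≤ b.val}) (fun b => (w b).val < i)
  have h₂ := card_filter_add_card_filter_not (s := {b : Fin n | i ≤ (w b).val}) (fun b => b.val < j)
  simp only [filter_filter, card_filter_le_val, card_filter_le_apply] at h₁ h₂
  have e₁ : rank w⁻¹ i j = #{b : Fin n | j ≤ b.val ∧ (w b).val < i} :=
    card_equiv w⁻¹ fun a => by simp [and_comm]
  have e₂ : rank w j i = #{b : Fin n | i ≤ (w b).val ∧ b.val < j} :=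
    congrArg card (filter_congr fun b _ => and_comm)
  have e₃ : #{b : Fin n | j ≤ b.val ∧ ¬(w b).val < i} = #{b : Fin n | i ≤ (w b).val ∧ ¬b.val < j} :=
    congrArg card (filter_congr fun b _ => by omega)
  omega

lemma rank_mul_w0_add (w : Perm (Fin n)) (i j : ℕ) :
    rank (w * w0 n) i j + rank w (n - i) j = n - j := by
  have h := card_filter_add_card_filter_not (s := {a : Fin n | j ≤ (w a).val})
    (fun a => a.val < n - i)
  simp only [filter_filter, card_filter_le_apply] at h
  have e₁ : rank (w * w0 n) i j = #{a : Fin n | j ≤ (w a).val ∧ ¬a.val < n - i} :=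
    card_equiv (w0 n) fun a => by
      simp only [w0, mem_filter, mem_univ, true_and, Perm.mul_apply, Fin.revPerm_apply,
        Fin.val_rev]
      omega
  have e₂ : rank w (n - i) j = #{a : Fin n | j ≤ (w a).val ∧ a.val < n - i} :=
    congrArg card (filter_congr fun _ _ => and_comm)
  omega

lemma rankLE_mul_simpleRefl {x : Perm (Fin n)} {j : ℕ} (hj : 1 ≤ j ∧ j ≤ n - 1)
    (hx : len n x < len n (x * simpleRefl n j)) : RankLE x (x * simpleRefl n j) := by
  intro i k
  rcases eq_or_ne i j with rfl | hi
  · obtain ⟨hx₁, -, hx₃⟩ := rank_around_simpleRefl x hj k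
    rcases len_mul_simpleRefl_cases x hj with ⟨hx', -⟩ | ⟨-, hlx⟩ <;> [skip; omega]
    rw [Fin.lt_def] at hx'
    split_ifs at hx₁ hx₃ <;> omega
  · rw [rank_mul_simpleRefl_of_ne x hj hi]

namespace RankLE

lemma refl (w : Perm (Fin n)) : RankLE w w := fun _ _ => le_rfl

lemma trans {u v w : Perm (Fin n)} (h₁ : RankLE u v) (h₂ : RankLE v w) : RankLE u w :=
  fun i j => (h₁ i j).trans (h₂ i j)

lemma antisymm {x y : Perm (Fin n)} (h₁ : RankLE x y) (h₂ : RankLE y x) : x = y := by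
  have key : ∀ a : Fin n, ∀ k, k ≤ (x a).val ↔ k ≤ (y a).val := fun a k => by
    have e₁ := rank_succ x a.isLt k
    have e₂ := rank_succ y a.isLt k
    have := le_antisymm (h₁ a k) (h₂ a k)
    have := le_antisymm (h₁ (a + 1) k) (h₂ (a + 1) k)
    simp only [Fin.eta] at e₁ e₂
    split_ifs at e₁ e₂ <;> omega
  ext a
  exact le_antisymm ((key a _).mp le_rfl) ((key a _).mpr le_rfl)

variable {x y : Perm (Fin n)} {j : ℕ}

lemma mul_simpleRefl (hj : 1 ≤ j ∧ j ≤ n - 1)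
    (hxy : len n x < len n (x * simpleRefl n j) ↔ len n y < len n (y * simpleRefl n j))
    (h : RankLE x y) : RankLE (x * simpleRefl n j) (y * simpleRefl n j) := by
  intro i k
  rcases eq_or_ne i j with rfl | hi
  · obtain ⟨hx₁, hx₂, hx₃⟩ := rank_around_simpleRefl x hj k
    obtain ⟨hy₁, hy₂, hy₃⟩ := rank_around_simpleRefl y hj k
    have := h (i - 1) k; have := h i k; have := h (i + 1) k
    rcases len_mul_simpleRefl_cases x hj with ⟨hx, hlx⟩ | ⟨hx, hlx⟩ <;>
    rcases len_mul_simpleRefl_cases y hj with ⟨hy, hly⟩ | ⟨hy, hly⟩ <;>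
    rw [Fin.lt_def] at hx hy <;> split_ifs at hx₁ hx₂ hx₃ hy₁ hy₂ hy₃ <;> omega
  · rw [rank_mul_simpleRefl_of_ne x hj hi, rank_mul_simpleRefl_of_ne y hj hi]
    exact h i k

lemma mul_simpleRefl_right (hj : 1 ≤ j ∧ j ≤ n - 1)
    (hx : len n x < len n (x * simpleRefl n j)) (hy : len n (y * simpleRefl n j) < len n y)
    (h : RankLE x y) : RankLE x (y * simpleRefl n j) := by
  intro i k
  rcases eq_or_ne i j with rfl | hi
  · obtain ⟨hx₁, hx₂, -⟩ := rank_around_simpleRefl x hj k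
    obtain ⟨hy₁, hy₂, hy₃⟩ := rank_around_simpleRefl y hj k
    have := h (i - 1) k; have := h i k; have := h (i + 1) k
    rcases len_mul_simpleRefl_cases x hj with ⟨hx', -⟩ | ⟨-, hlx⟩ <;> [skip; omega]
    rcases len_mul_simpleRefl_cases y hj with ⟨-, hly⟩ | ⟨hy', -⟩ <;> [omega; skip]
    rw [Fin.lt_def] at hx' hy'
    split_ifs at hx₁ hx₂ hy₁ hy₂ hy₃ <;> omega
  · rw [rank_mul_simpleRefl_of_ne y hj hi]
    exact h i k

lemma inv {u w : Perm (Fin n)} (h : RankLE u w) : RankLE u⁻¹ w⁻¹ := fun i j => by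
  have := rank_inv_add u i j
  have := rank_inv_add w i j
  have := h j i
  omega

lemma mul_w0 {u w : Perm (Fin n)} (h : RankLE u w) : RankLE (w * w0 n) (u * w0 n) := fun i j => by
  have := rank_mul_w0_add u i j
  have := rank_mul_w0_add w i j
  have := h (n - i) j
  omega

end RankLE

end Rank

section Subword

variable {u w : Perm (Fin n)} {j : ℕ}

lemma exists_isReduced (w : Perm (Fin n)) : ∃ l, IsReduced n l ∧ wordProd n l = w := by
  obtain ⟨l, hl, hlen, rfl⟩ := exists_word_length_eq_invCount w
  exact ⟨l, ⟨hl, by rw [len_eq_invCount, hlen]⟩, rfl⟩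

lemma isReduced_concat {l : List ℕ} (h : IsReduced n (l ++ [j])) :
    IsReduced n l ∧ len n (wordProd n l) < len n (wordProd n l * simpleRefl n j) := by
  obtain ⟨hl, hj⟩ := isWord_concat.mp h.1
  have hlen := h.2
  have := len_le_length hl
  rw [wordProd_concat, List.length_append, List.length_singleton] at hlen
  rcases len_mul_simpleRefl (wordProd n l) hj with h' | h' <;>
    exact ⟨⟨hl, by omega⟩, by omega⟩

lemma mul_simpleRefl_rankLE (hj : 1 ≤ j ∧ j ≤ n - 1)
    (hw : len n (w * simpleRefl n j) < len n w) : RankLE (w * simpleRefl n j) w := by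
  have := rankLE_mul_simpleRefl (x := w * simpleRefl n j) hj
  rw [mul_simpleRefl_mul_simpleRefl] at this
  exact this hw

lemma rankLE_demStep (hj : 1 ≤ j ∧ j ≤ n - 1) (w : Perm (Fin n)) :
    RankLE w (demStep n w j) := by
  unfold demStep
  split_ifs with h
  · exact rankLE_mul_simpleRefl hj h
  · exact .refl w

/-- The lifting property of the Bruhat order, in the form `u ≤ w ⇒ u s ≤ max (w, w s)`. -/
lemma RankLE.mul_simpleRefl_demStep (hj : 1 ≤ j ∧ j ≤ n - 1) (h : RankLE u w) :
    RankLE (u * simpleRefl n j) (demStep n w j) := by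
  unfold demStep
  split_ifs with hw
  · rcases len_mul_simpleRefl u hj with hu | hu
    · exact h.mul_simpleRefl hj (by omega)
    · exact ((mul_simpleRefl_rankLE hj (by omega)).trans h).trans (rankLE_mul_simpleRefl hj hw)
  · have := len_mul_simpleRefl w hj
    rcases len_mul_simpleRefl u hj with hu | hu
    · have := (h.mul_simpleRefl_right hj (by omega) (by omega)).mul_simpleRefl hj
        (by rw [mul_simpleRefl_mul_simpleRefl]; omega)
      rwa [mul_simpleRefl_mul_simpleRefl] at this
    · exact (mul_simpleRefl_rankLE hj (by omega)).trans h

lemma demProd_concat (l : List ℕ) (j : ℕ) :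
    demProd n (l ++ [j]) = demStep n (demProd n l) j := by
  simp [demProd, List.foldl_append]

lemma foldl_demStep_eq_mul (w : Perm (Fin n)) (l : List ℕ) :
    ∃ l', l'.Sublist l ∧ l.foldl (demStep n) w = w * wordProd n l' := by
  induction l using List.reverseRecOn with
  | nil => exact ⟨[], .slnil, by simp⟩
  | append_singleton l j ih =>
    obtain ⟨l', hs, h⟩ := ih
    rw [List.foldl_append, List.foldl_cons, List.foldl_nil, h, demStep]
    split_ifs
    · exact ⟨l' ++ [j], hs.append (.refl _), by rw [wordProd_concat, mul_assoc]⟩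
    · exact ⟨l', hs.trans (List.sublist_append_left _ _), rfl⟩

lemma rankLE_demProd_of_sublist {l l' : List ℕ} (hl : IsWord n l) (hs : l'.Sublist l) :
    RankLE (wordProd n l') (demProd n l) := by
  induction l using List.reverseRecOn generalizing l' with
  | nil => rw [List.sublist_nil.mp hs]; exact .refl _
  | append_singleton l j ih =>
    obtain ⟨hl, hj⟩ := isWord_concat.mp hl
    rw [demProd_concat]
    obtain ⟨x, y, rfl, hx, hy⟩ := List.sublist_append_iff.mp hs
    rcases List.sublist_singleton.mp hy with rfl | rfl
    · rw [List.append_nil]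
      exact (ih hl hx).trans (rankLE_demStep hj _)
    · rw [wordProd_concat]
      exact (ih hl hx).mul_simpleRefl_demStep hj

lemma demProd_of_isReduced {l : List ℕ} (hl : IsReduced n l) : demProd n l = wordProd n l := by
  induction l using List.reverseRecOn with
  | nil => rfl
  | append_singleton l j ih =>
    obtain ⟨hl', hasc⟩ := isReduced_concat hl
    rw [demProd_concat, ih hl', demStep, if_pos hasc, wordProd_concat]

lemma one_rankLE (w : Perm (Fin n)) : RankLE 1 w := by
  obtain ⟨l, hl, rfl⟩ := exists_isReduced w
  simpa [demProd_of_isReduced hl] using rankLE_demProd_of_sublist hl.1 (List.nil_sublist l)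

/-- The subword property. -/
lemma exists_sublist_of_rankLE {l : List ℕ} (hl : IsReduced n l) (h : RankLE u (wordProd n l)) :
    ∃ l', l'.Sublist l ∧ IsReduced n l' ∧ wordProd n l' = u := by
  induction l using List.reverseRecOn generalizing u with
  | nil =>
    obtain rfl := h.antisymm (one_rankLE u)
    exact ⟨[], .slnil, hl, rfl⟩
  | append_singleton l j ih =>
    obtain ⟨hl', hasc⟩ := isReduced_concat hl
    obtain ⟨-, hj⟩ := isWord_concat.mp hl.1
    rw [wordProd_concat] at h
    have hdesc : len n (wordProd n l * simpleRefl n j * simpleRefl n j) <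
        len n (wordProd n l * simpleRefl n j) := by
      rwa [mul_simpleRefl_mul_simpleRefl]
    rcases len_mul_simpleRefl u hj with hu | hu
    · have := h.mul_simpleRefl_right hj (by omega) hdesc
      rw [mul_simpleRefl_mul_simpleRefl] at this
      obtain ⟨l', hs, hl'', rfl⟩ := ih hl' this
      exact ⟨l', hs.trans (List.sublist_append_left _ _), hl'', rfl⟩
    · have := h.mul_simpleRefl hj (iff_of_false (by omega) hdesc.not_gt)
      rw [mul_simpleRefl_mul_simpleRefl] at this
      obtain ⟨l', hs, hl'', hu'⟩ := ih hl' this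
      refine ⟨l' ++ [j], hs.append (.refl _), ⟨isWord_concat.mpr ⟨hl''.1, hj⟩, ?_⟩, ?_⟩
      · rw [wordProd_concat, hu', mul_simpleRefl_mul_simpleRefl, List.length_append,
          List.length_singleton, ← hl''.2, hu']
        omega
      · rw [wordProd_concat, hu', mul_simpleRefl_mul_simpleRefl]

theorem bruhatLE_iff_rankLE : bruhatLE n u w ↔ RankLE u w := by
  constructor
  · rintro ⟨l, l', hl, rfl, hs, -, rfl⟩
    simpa [demProd_of_isReduced hl] using rankLE_demProd_of_sublist hl.1 hs
  · intro h
    obtain ⟨l, hl, rfl⟩ := exists_isReduced w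
    obtain ⟨l', hs, hl', rfl⟩ := exists_sublist_of_rankLE hl h
    exact ⟨l, l', hl, rfl, hs, hl', rfl⟩

lemma exists_isReduced_sublist {l : List ℕ} (hl : IsWord n l) :
    ∃ l', l'.Sublist l ∧ IsReduced n l' ∧ wordProd n l' = wordProd n l := by
  induction l using List.reverseRecOn with
  | nil => exact ⟨[], .slnil, ⟨by simp, by simp [len_eq_invCount, invCount_one]⟩, rfl⟩
  | append_singleton l j ih =>
    obtain ⟨hl, hj⟩ := isWord_concat.mp hl
    obtain ⟨l₁, hs, hl₁, hw⟩ := ih hl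
    rw [wordProd_concat, ← hw]
    rcases len_mul_simpleRefl (wordProd n l₁) hj with hasc | hdesc
    · refine ⟨l₁ ++ [j], hs.append (.refl _), ⟨isWord_concat.mpr ⟨hl₁.1, hj⟩, ?_⟩,
        wordProd_concat _ _⟩
      rw [wordProd_concat, hasc, hl₁.2, List.length_append, List.length_singleton]
    · obtain ⟨l₂, hs₂, hl₂, hw₂⟩ :=
        exists_sublist_of_rankLE hl₁ (mul_simpleRefl_rankLE hj (by omega))
      exact ⟨l₂, hs₂.trans (hs.trans (List.sublist_append_left _ _)), hl₂, hw₂⟩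

lemma rankLE_demProd_iff {l : List ℕ} (hl : IsWord n l) {x : Perm (Fin n)} :
    RankLE x (demProd n l) ↔ ∃ l', l'.Sublist l ∧ wordProd n l' = x := by
  refine ⟨fun h => ?_, fun ⟨l', hs, hx⟩ => hx ▸ rankLE_demProd_of_sublist hl hs⟩
  obtain ⟨l₀, hs₀, h₀⟩ := foldl_demStep_eq_mul 1 l
  rw [demProd, h₀, one_mul] at h
  obtain ⟨l₁, hs₁, hl₁, hw₁⟩ :=
    exists_isReduced_sublist (fun i hi => hl i (hs₀.subset hi))
  obtain ⟨l', hs', -, rfl⟩ := exists_sublist_of_rankLE hl₁ (hw₁ ▸ h)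
  exact ⟨l', hs'.trans (hs₁.trans hs₀), rfl⟩

end Subword

section Bruhat

variable {u v w : Perm (Fin n)}

lemma bruhatLE.refl (w : Perm (Fin n)) : bruhatLE n w w :=
  bruhatLE_iff_rankLE.mpr (.refl w)

lemma bruhatLE.antisymm (h₁ : bruhatLE n u w) (h₂ : bruhatLE n w u) : u = w :=
  (bruhatLE_iff_rankLE.mp h₁).antisymm (bruhatLE_iff_rankLE.mp h₂)

lemma bruhatLE.inv (h : bruhatLE n u w) : bruhatLE n u⁻¹ w⁻¹ :=
  bruhatLE_iff_rankLE.mpr (bruhatLE_iff_rankLE.mp h).inv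

lemma bruhatLE_inv_iff : bruhatLE n u w⁻¹ ↔ bruhatLE n u⁻¹ w :=
  ⟨fun h => inv_inv w ▸ h.inv, fun h => inv_inv u ▸ h.inv⟩

lemma bruhatLE.mul_w0 (h : bruhatLE n u w) : bruhatLE n (w * w0 n) (u * w0 n) :=
  bruhatLE_iff_rankLE.mpr (bruhatLE_iff_rankLE.mp h).mul_w0

lemma w0_mul_w0 : w0 n * w0 n = 1 := Equiv.ext fun a => Fin.rev_rev a

lemma IsBruhatGreatest.unique {K : Set (Perm (Fin n))} {m m' : Perm (Fin n)}
    (h : IsBruhatGreatest n K m) (h' : IsBruhatGreatest n K m') : m = m' :=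
  (h'.2 m h.1).antisymm (h.2 m' h'.1)

lemma eq_of_forall_bruhatLE_iff (h : ∀ x, bruhatLE n x u ↔ bruhatLE n x w) : u = w :=
  ((h u).mp (.refl u)).antisymm ((h w).mpr (.refl w))

end Bruhat

section Demazure

variable {w w' x : Perm (Fin n)} {l₁ l₂ : List ℕ}

lemma bruhatLE_iff_exists_sublist {l : List ℕ} (hl : IsReduced n l) :
    bruhatLE n x (wordProd n l) ↔ ∃ l', l'.Sublist l ∧ wordProd n l' = x := by
  rw [bruhatLE_iff_rankLE, ← demProd_of_isReduced hl, rankLE_demProd_iff hl.1]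

lemma bruhatLE_demProd_append_iff (hl₁ : IsReduced n l₁) (hl₂ : IsReduced n l₂) :
    bruhatLE n x (demProd n (l₁ ++ l₂)) ↔ ∃ u v, bruhatLE n u (wordProd n l₁) ∧
      bruhatLE n v (wordProd n l₂) ∧ x = u * v := by
  have hl : IsWord n (l₁ ++ l₂) := fun i hi => (List.mem_append.mp hi).elim (hl₁.1 i) (hl₂.1 i)
  rw [bruhatLE_iff_rankLE, rankLE_demProd_iff hl]
  simp only [bruhatLE_iff_exists_sublist hl₁, bruhatLE_iff_exists_sublist hl₂,
    List.sublist_append_iff]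
  constructor
  · rintro ⟨_, ⟨r₁, r₂, rfl, h₁, h₂⟩, rfl⟩
    exact ⟨_, _, ⟨r₁, h₁, rfl⟩, ⟨r₂, h₂, rfl⟩, wordProd_append r₁ r₂⟩
  · rintro ⟨_, _, ⟨r₁, h₁, rfl⟩, ⟨r₂, h₂, rfl⟩, rfl⟩
    exact ⟨r₁ ++ r₂, ⟨r₁, r₂, rfl, h₁, h₂⟩, wordProd_append r₁ r₂⟩

lemma demMul_eq_demProd (hl₁ : IsReduced n l₁) (hl₂ : IsReduced n l₂) :
    demMul n (wordProd n l₁) (wordProd n l₂) = demProd n (l₁ ++ l₂) := by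
  have hM : IsBruhatGreatest n {x | ∃ u v, bruhatLE n u (wordProd n l₁) ∧
      bruhatLE n v (wordProd n l₂) ∧ x = u * v} (demProd n (l₁ ++ l₂)) :=
    ⟨(bruhatLE_demProd_append_iff hl₁ hl₂).mp (.refl _),
      fun x hx => (bruhatLE_demProd_append_iff hl₁ hl₂).mpr hx⟩
  rw [demMul, dif_pos ⟨_, hM⟩]
  exact (Exists.choose_spec ⟨_, hM⟩).unique hM

theorem bruhatLE_demMul_iff :
    bruhatLE n x (demMul n w w') ↔ ∃ u v, bruhatLE n u w ∧ bruhatLE n v w' ∧ x = u * v := by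
  obtain ⟨l₁, hl₁, rfl⟩ := exists_isReduced w
  obtain ⟨l₂, hl₂, rfl⟩ := exists_isReduced w'
  rw [demMul_eq_demProd hl₁ hl₂, bruhatLE_demProd_append_iff hl₁ hl₂]

lemma demMul_inv (w w' : Perm (Fin n)) : (demMul n w w')⁻¹ = demMul n w'⁻¹ w⁻¹ := by
  refine eq_of_forall_bruhatLE_iff fun x => ?_
  rw [bruhatLE_inv_iff, bruhatLE_demMul_iff, bruhatLE_demMul_iff]
  constructor
  · rintro ⟨u, v, hu, hv, hx⟩
    exact ⟨v⁻¹, u⁻¹, hv.inv, hu.inv, by rw [← mul_inv_rev, ← hx, inv_inv]⟩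
  · rintro ⟨v, u, hv, hu, rfl⟩
    exact ⟨u⁻¹, v⁻¹, bruhatLE_inv_iff.mp hu, bruhatLE_inv_iff.mp hv, mul_inv_rev v u⟩

lemma exists_demMul_eq_mul_right (w w' : Perm (Fin n)) :
    ∃ c, bruhatLE n c w' ∧ demMul n w w' = w * c := by
  obtain ⟨l₁, hl₁, rfl⟩ := exists_isReduced w
  obtain ⟨l₂, hl₂, rfl⟩ := exists_isReduced w'
  obtain ⟨l', hs, h⟩ := foldl_demStep_eq_mul (demProd n l₁) l₂
  refine ⟨wordProd n l', (bruhatLE_iff_exists_sublist hl₂).mpr ⟨l', hs, rfl⟩, ?_⟩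
  rw [demMul_eq_demProd hl₁ hl₂, demProd, List.foldl_append, ← demProd, h,
    demProd_of_isReduced hl₁]

lemma exists_demMul_eq_mul_left (w w' : Perm (Fin n)) :
    ∃ d, bruhatLE n d w ∧ demMul n w w' = d * w' := by
  obtain ⟨c, hc, h⟩ := exists_demMul_eq_mul_right w'⁻¹ w⁻¹
  refine ⟨c⁻¹, bruhatLE_inv_iff.mp hc, ?_⟩
  rw [← inv_inv (demMul n w w'), demMul_inv, h, mul_inv_rev, inv_inv]

end Demazure

section Parabolic

theorem exists_forall_bruhatLE_iff_mem_closure {J : Set ℕ} (hJ : ∀ j ∈ J, 1 ≤ j ∧ j ≤ n - 1) :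
    ∃ m : Perm (Fin n), ∀ u, bruhatLE n u m ↔ u ∈ Subgroup.closure (simpleRefl n '' J) := by
  set W := Subgroup.closure (simpleRefl n '' J)
  obtain ⟨m, hmW, hmax⟩ := exists_max_image {x | x ∈ W} (len n) ⟨1, by simp [W.one_mem]⟩
  simp only [mem_filter, mem_univ, true_and] at hmW hmax
  have hstep : ∀ j ∈ J, demStep n m j = m := fun j hj =>
    if_neg (not_lt.mpr (hmax _ (W.mul_mem hmW (Subgroup.subset_closure ⟨j, hj, rfl⟩))))
  refine ⟨m, fun u => ⟨fun hu => ?_, fun hu => ?_⟩⟩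
  · obtain ⟨l, hlJ, rfl⟩ := mem_closure_simpleRefl_iff.mp hmW
    obtain ⟨l', hs, hl', hw⟩ := exists_isReduced_sublist fun i hi => hJ i (hlJ i hi)
    obtain ⟨l'', hs', rfl⟩ := (bruhatLE_iff_exists_sublist hl').mp (hw ▸ hu)
    exact mem_closure_simpleRefl_iff.mpr ⟨l'', fun i hi => hlJ i ((hs'.trans hs).subset hi), rfl⟩
  · obtain ⟨l, hlJ, rfl⟩ := mem_closure_simpleRefl_iff.mp hu
    clear hu
    rw [bruhatLE_iff_rankLE]
    induction l using List.reverseRecOn with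
    | nil => exact one_rankLE m
    | append_singleton l j ih =>
      have hj : j ∈ J := hlJ j (by simp)
      rw [wordProd_concat, ← hstep j hj]
      exact (ih fun i hi => hlJ i (by simp [hi])).mul_simpleRefl_demStep (hJ j hj)

lemma inv_eq_demMul_of_isBruhatGreatest {W : Subgroup (Perm (Fin n))} {m τ τhat : Perm (Fin n)}
    (hm : ∀ u, bruhatLE n u m ↔ u ∈ W)
    (hτ : IsBruhatGreatest n {x | ∃ v ∈ W, x = τ * v} τhat) : τhat⁻¹ = demMul n m τ⁻¹ := by
  obtain ⟨d, hd, hD⟩ := exists_demMul_eq_mul_left m τ⁻¹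
  obtain ⟨v, hv, rfl⟩ := hτ.1
  refine bruhatLE.antisymm ?_ ?_
  · exact bruhatLE_demMul_iff.mpr ⟨v⁻¹, τ⁻¹, (hm _).mpr (W.inv_mem hv), .refl _, mul_inv_rev τ v⟩
  · rw [hD]
    simpa using (hτ.2 (τ * d⁻¹) ⟨d⁻¹, W.inv_mem ((hm d).mp hd), rfl⟩).inv

lemma bruhatLE_inv_iff_of_isBruhatGreatest {W : Subgroup (Perm (Fin n))}
    {m τ τhat d : Perm (Fin n)} (hm : ∀ u, bruhatLE n u m ↔ u ∈ W)
    (hτ : IsBruhatGreatest n {x | ∃ v ∈ W, x = τ * v} τhat) :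
    bruhatLE n d τhat⁻¹ ↔ ∃ a ∈ W, ∃ u, bruhatLE n u τ⁻¹ ∧ d = a * u := by
  simp only [inv_eq_demMul_of_isBruhatGreatest hm hτ, bruhatLE_demMul_iff, hm, exists_and_left]

end Parabolic

theorem isBruhatLeast_parabolic_interval_general (n : ℕ) (J K : Set ℕ)
    (hJ : ∀ j ∈ J, 1 ≤ j ∧ j ≤ n - 1)
    (τ φ τhat φtil : Equiv.Perm (Fin n))
    (hτ : IsBruhatGreatest n
      {x | ∃ v ∈ Subgroup.closure (simpleRefl n '' J), x = τ * v} τhat)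
    (hφ : IsBruhatLeast n
      {x | ∃ v ∈ Subgroup.closure (simpleRefl n '' K), x = φ * v} φtil) :
    IsBruhatLeast n
      {x | ∃ a ∈ Subgroup.closure (simpleRefl n '' J), ∃ u, bruhatLE n u τ⁻¹ ∧
        ∃ b ∈ Subgroup.closure (simpleRefl n '' K), x = a * u * φ * b}
      (demMul n τhat⁻¹ (φtil * w0 n) * w0 n) := by
  obtain ⟨m, hm⟩ := exists_forall_bruhatLE_iff_mem_closure hJ
  have hX : ∀ x, (∃ a ∈ Subgroup.closure (simpleRefl n '' J), ∃ u, bruhatLE n u τ⁻¹ ∧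
        ∃ b ∈ Subgroup.closure (simpleRefl n '' K), x = a * u * φ * b) ↔
      ∃ d, bruhatLE n d τhat⁻¹ ∧ ∃ b ∈ Subgroup.closure (simpleRefl n '' K), x = d * φ * b := by
    simp only [bruhatLE_inv_iff_of_isBruhatGreatest hm hτ]
    exact fun x => ⟨fun ⟨a, ha, u, hu, b, hb, hx⟩ => ⟨a * u, ⟨a, ha, u, hu, rfl⟩, b, hb, hx⟩,
      fun ⟨_, ⟨a, ha, u, hu, rfl⟩, b, hb, hx⟩ => ⟨a, ha, u, hu, b, hb, hx⟩⟩
  obtain ⟨d, hd, hG⟩ := exists_demMul_eq_mul_left τhat⁻¹ (φtil * w0 n)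
  obtain ⟨b₀, hb₀, rfl⟩ := hφ.1
  refine ⟨(hX _).mpr ⟨d, hd, b₀, hb₀, ?_⟩, fun x hx => ?_⟩
  · rw [hG, mul_assoc, mul_assoc, w0_mul_w0, mul_one, mul_assoc]
  obtain ⟨d', hd', b, hb, rfl⟩ := (hX x).mp hx
  have hφb : bruhatLE n (φ * b * w0 n) (φ * b₀ * w0 n) := (hφ.2 _ ⟨b, hb, rfl⟩).mul_w0
  have := (bruhatLE_demMul_iff.mpr ⟨d', _, hd', hφb, rfl⟩).mul_w0
  simpa [mul_assoc, w0_mul_w0] using this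

/-- Let `W_J, W_K` be standard parabolic subgroups of `S_n`, let `τ̂` be
the maximal element of `τ W_J` and `φ̃` the minimal element of `φ W_K` in the Bruhat
order. Then `W_J I(τ⁻¹) φ W_K` has a unique minimal element in the Bruhat order, namely
`(τ̂⁻¹ * (φ̃ w₀)) · w₀`, where `*` is the Demazure product. -/
theorem isBruhatLeast_parabolic_interval (n : ℕ) (hn : 1 ≤ n) (J K : Set ℕ)
    (hJ : ∀ j ∈ J, 1 ≤ j ∧ j ≤ n - 1) (hK : ∀ j ∈ K, 1 ≤ j ∧ j ≤ n - 1)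
    (τ φ τhat φtil : Equiv.Perm (Fin n))
    (hτ : IsBruhatGreatest n
      {x | ∃ v ∈ Subgroup.closure (simpleRefl n '' J), x = τ * v} τhat)
    (hφ : IsBruhatLeast n
      {x | ∃ v ∈ Subgroup.closure (simpleRefl n '' K), x = φ * v} φtil) :
    IsBruhatLeast n
      {x | ∃ a ∈ Subgroup.closure (simpleRefl n '' J), ∃ u, bruhatLE n u τ⁻¹ ∧
        ∃ b ∈ Subgroup.closure (simpleRefl n '' K), x = a * u * φ * b}
      (demMul n τhat⁻¹ (φtil * w0 n) * w0 n) :=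
  isBruhatLeast_parabolic_interval_general n J K hJ τ φ τhat φtil hτ hφ

end KK
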